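/- arXiv:1805.07299 — 3 statements merged into one kernel-verified Lean document; each statement's English description precedes it below -/
import Mathlib

section
/- The set 𝔩 of real n×n traceless matrices all of whose row sums and column sums equal zero is a Lie subalgebra of gl(n,ℝ) (it is a linear subspace closed under the commutator [A,B] = AB − BA), and it equals the linear span of the matrices A_{ij} (1 ≤ i,j ≤ n−1, i ≠ j) together with the matrices H_k (1 ≤ k ≤ n−2). -/
open Matrix Finset

attribute [local instance 100] LieRing.ofAssociativeRing

/-!
The bracket preserves `𝔩`: it is cut out by `tr M = 0`, `M 𝟙 = 0` and `𝟙ᵀ M = 0`, and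
`tr [X, Y] = 0`, `[X, Y] 𝟙 = X (Y 𝟙) - Y (X 𝟙)`.

For the span, expand `M ∈ 𝔩` in the orthonormal basis `vₖ ⊗ vₗ` of all matrices, with
coefficients `cₖₗ = vₖ ⬝ M vₗ`. Since `v₀` is a multiple of `𝟙`, every coefficient with an index
`0` vanishes; the off-diagonal ones are coefficients of the `Aₖₗ`, and the diagonal ones sum to
`tr M = 0`, i.e. they form a vector of `Π_{n-1}`, which is expanded in the orthonormal basis `γᵏ`,
giving a combination of the `Hₖ`. Both expansions rest on completeness: a square matrix with
orthonormal rows has orthonormal columns, applied to the `vₖ` and to the `γᵏ` completed by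
`𝟙/√(n-1)`.
-/

namespace Matrix

variable {ι κ R : Type*} [CommRing R]

section ZeroSum

variable [Fintype ι] [DecidableEq ι]

variable (ι R) in
/-- The paper's `𝔩`: the row and column sums of `M` are the entries of `M *ᵥ 1` and `1 ᵥ* M`. -/
def zeroSumLieSubalgebra : LieSubalgebra R (Matrix ι ι R) where
  carrier := {M | M.trace = 0 ∧ M *ᵥ 1 = 0 ∧ 1 ᵥ* M = 0}
  add_mem' := by
    rintro M N ⟨hM, hM₁, hM₂⟩ ⟨hN, hN₁, hN₂⟩
    exact ⟨by simp [hM, hN], by simp [add_mulVec, hM₁, hN₁], by simp [vecMul_add, hM₂, hN₂]⟩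
  zero_mem' := by simp
  smul_mem' := by
    rintro c M ⟨hM, hM₁, hM₂⟩
    exact ⟨by simp [hM], by simp [smul_mulVec, hM₁], by simp [vecMul_smul, hM₂]⟩
  lie_mem' := by
    rintro M N ⟨-, hM₁, hM₂⟩ ⟨-, hN₁, hN₂⟩
    rw [Ring.lie_def]
    exact ⟨by rw [trace_sub, trace_mul_comm, sub_self],
      by simp [sub_mulVec, ← mulVec_mulVec, hM₁, hN₁],
      by simp [vecMul_sub, ← vecMul_vecMul, hM₂, hN₂]⟩

theorem mem_zeroSumLieSubalgebra_iff {M : Matrix ι ι R} :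
    M ∈ zeroSumLieSubalgebra ι R ↔ M.trace = 0 ∧ M *ᵥ 1 = 0 ∧ 1 ᵥ* M = 0 :=
  Iff.rfl

theorem coe_zeroSumLieSubalgebra :
    (zeroSumLieSubalgebra ι R : Set (Matrix ι ι R)) =
      {M | M.trace = 0 ∧ (∀ i, ∑ j, M i j = 0) ∧ ∀ j, ∑ i, M i j = 0} := by
  ext M
  simp [mem_zeroSumLieSubalgebra_iff, funext_iff, mulVec, vecMul, dotProduct]

theorem vecMulVec_mem_zeroSumLieSubalgebra {a b : ι → R} (ha : ∑ i, a i = 0)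
    (hb : ∑ i, b i = 0) (hab : a ⬝ᵥ b = 0) : vecMulVec a b ∈ zeroSumLieSubalgebra ι R :=
  ⟨by simp [hab], by simp [vecMulVec_mulVec, dotProduct_one, hb],
    by simp [vecMul_vecMulVec, one_dotProduct, ha]⟩

theorem sum_smul_vecMulVec_self_mem_zeroSumLieSubalgebra {s : Finset κ} {w : κ → ι → R}
    (hw : ∀ k ∈ s, ∑ i, w k i = 0) (hw' : ∀ k ∈ s, w k ⬝ᵥ w k = 1) {c : κ → R}
    (hc : ∑ k ∈ s, c k = 0) :
    ∑ k ∈ s, c k • vecMulVec (w k) (w k) ∈ zeroSumLieSubalgebra ι R := by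
  refine ⟨?_, ?_, ?_⟩
  · rw [trace_sum, ← hc]
    exact sum_congr rfl fun k hk => by simp [hw' k hk]
  · rw [sum_mulVec]
    exact sum_eq_zero fun k hk => by
      simp [smul_mulVec, vecMulVec_mulVec, dotProduct_one, hw k hk]
  · rw [vecMul_sum]
    exact sum_eq_zero fun k hk => by
      simp [vecMul_smul, vecMul_vecMulVec, one_dotProduct, hw k hk]

end ZeroSum

theorem cols_orthonormal_of_rows_orthonormal [Fintype ι] [Fintype κ] [DecidableEq ι] [DecidableEq κ]
    (hcard : Fintype.card κ = Fintype.card ι) {Q : κ → ι → R}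
    (hQ : ∀ k l, ∑ i, Q k i * Q l i = if k = l then 1 else 0) (a b : ι) :
    ∑ k, Q k a * Q k b = if a = b then 1 else 0 := by
  have h : of Q * (of Q)ᵀ = 1 := by
    ext k l
    simpa [mul_apply, one_apply] using hQ k l
  simpa [mul_apply, one_apply] using
    congrFun₂ ((mul_eq_one_comm_of_card_eq _ _ _ hcard).mp h) a b

theorem sum_range_vecMulVec_self_eq_one [Fintype ι] [DecidableEq ι] {n : ℕ}
    (hn : Fintype.card ι = n) {v : ℕ → ι → R}
    (hv : ∀ i, i < n → ∀ j, j < n → ∑ k, v i k * v j k = if i = j then 1 else 0) :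
    ∑ i ∈ range n, vecMulVec (v i) (v i) = 1 := by
  subst hn
  ext a b
  rw [sum_apply, ← Fin.sum_univ_eq_sum_range (fun i => vecMulVec (v i) (v i) a b)]
  refine cols_orthonormal_of_rows_orthonormal (Fintype.card_fin _) (fun k l => ?_) a b
  simpa [Fin.ext_iff] using hv k k.isLt l l.isLt

theorem sum_mul_eq_ite_sub_of_orthonormal_of_sum_eq_zero {s : Finset ι} {t : Finset κ}
    [DecidableEq ι] [DecidableEq κ]
    (hcard : #t + 1 = #s) {γ : κ → ι → ℝ}
    (horth : ∀ k ∈ t, ∀ l ∈ t, ∑ i ∈ s, γ k i * γ l i = if k = l then 1 else 0)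
    (hsum : ∀ k ∈ t, ∑ i ∈ s, γ k i = 0) :
    ∀ a ∈ s, ∀ b ∈ s, ∑ k ∈ t, γ k a * γ k b = (if a = b then 1 else 0) - (#s : ℝ)⁻¹ := by
  -- complete `γ` by the unit vector proportional to `𝟙` to a square orthonormal system
  set u : ℝ := (√(#s : ℝ))⁻¹
  have hu : u * u = (#s : ℝ)⁻¹ := by
    rw [← mul_inv, Real.mul_self_sqrt (Nat.cast_nonneg _)]
  let Q : Option t → s → ℝ := fun k i => k.elim u (fun k => γ k i)
  have hQ : ∀ k l, ∑ i, Q k i * Q l i = if k = l then 1 else 0 := by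
    have hs : (#s : ℝ) ≠ 0 := Nat.cast_ne_zero.mpr (by omega)
    rintro (_ | ⟨k, hk⟩) (_ | ⟨l, hl⟩)
    · simp [Q, hu, hs]
    · simp [Q, ← mul_sum, sum_attach s (γ l), hsum l hl]
    · simp [Q, ← sum_mul, sum_attach s (γ k), hsum k hk]
    · simpa [Q, Subtype.ext_iff] using sum_coe_sort s (fun i => γ k i * γ l i) ▸ horth k hk l hl
  intro a ha b hb
  have h := cols_orthonormal_of_rows_orthonormal (by simpa using hcard) hQ ⟨a, ha⟩ ⟨b, hb⟩
  rw [Fintype.sum_option] at h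
  simp only [Q, Option.elim, hu, Subtype.mk.injEq] at h
  rw [← h, sum_coe_sort t (fun k => γ k a * γ k b)]
  ring

section Expansion

variable [Fintype ι] [DecidableEq ι] {s : Finset κ} {v : κ → ι → R}

theorem eq_sum_sum_smul_vecMulVec (hv : ∑ k ∈ s, vecMulVec (v k) (v k) = 1) (M : Matrix ι ι R) :
    M = ∑ k ∈ s, ∑ l ∈ s, (v k ⬝ᵥ M *ᵥ v l) • vecMulVec (v k) (v l) := by
  calc M = (∑ k ∈ s, vecMulVec (v k) (v k)) * M * ∑ l ∈ s, vecMulVec (v l) (v l) := by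
        rw [hv, one_mul, mul_one]
    _ = _ := by
      rw [sum_mul, sum_mul]
      refine sum_congr rfl fun k _ => (mul_sum _ _ _).trans (sum_congr rfl fun l _ => ?_)
      rw [vecMulVec_mul, vecMulVec_mul_vecMulVec, vecMulVec_smul, dotProduct_mulVec]

theorem trace_eq_sum_dotProduct_mulVec (hv : ∑ k ∈ s, vecMulVec (v k) (v k) = 1)
    (M : Matrix ι ι R) : M.trace = ∑ k ∈ s, v k ⬝ᵥ M *ᵥ v k := by
  conv_lhs => rw [← mul_one M, ← hv, mul_sum, trace_sum]
  refine sum_congr rfl fun k _ => ?_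
  rw [mul_vecMulVec, trace_vecMulVec, dotProduct_comm]

variable [DecidableEq κ] {k₀ : κ} {M : Matrix ι ι R}

theorem eq_sum_sum_erase_smul_vecMulVec (hv : ∑ k ∈ s, vecMulVec (v k) (v k) = 1)
    (hM : M *ᵥ v k₀ = 0) (hM' : v k₀ ᵥ* M = 0) :
    M = ∑ k ∈ s.erase k₀, ∑ l ∈ s.erase k₀, (v k ⬝ᵥ M *ᵥ v l) • vecMulVec (v k) (v l) := by
  conv_lhs => rw [eq_sum_sum_smul_vecMulVec hv M]
  rw [← sum_erase (a := k₀) _ (by simp [dotProduct_mulVec, hM'])]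
  exact sum_congr rfl fun k _ => (sum_erase (a := k₀) _ (by simp [hM])).symm

theorem trace_eq_sum_erase_dotProduct_mulVec (hv : ∑ k ∈ s, vecMulVec (v k) (v k) = 1)
    (hM : M *ᵥ v k₀ = 0) : M.trace = ∑ k ∈ s.erase k₀, v k ⬝ᵥ M *ᵥ v k := by
  rw [trace_eq_sum_dotProduct_mulVec hv, sum_erase (a := k₀) _ (by simp [hM])]

end Expansion

end Matrix

section DiagonalExpansion

variable {ι κ R V : Type*} [CommRing R] [AddCommGroup V] [Module R V] [DecidableEq ι]
  {s : Finset ι} {t : Finset κ} {γ : κ → ι → R} {c : R}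

theorem sum_smul_eq_sum_smul_sum_smul
    (hγ : ∀ a ∈ s, ∀ b ∈ s, ∑ k ∈ t, γ k a * γ k b = (if a = b then 1 else 0) - c)
    {d : ι → R} (hd : ∑ i ∈ s, d i = 0) (E : ι → V) :
    ∑ i ∈ s, d i • E i = ∑ k ∈ t, (∑ j ∈ s, d j * γ k j) • ∑ i ∈ s, γ k i • E i := by
  have hcoef : ∀ i ∈ s, ∑ k ∈ t, (∑ j ∈ s, d j * γ k j) * γ k i = d i := fun i hi =>
    calc ∑ k ∈ t, (∑ j ∈ s, d j * γ k j) * γ k i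
        = ∑ j ∈ s, d j * ∑ k ∈ t, γ k j * γ k i := by
          simp only [sum_mul, mul_sum, mul_assoc]
          exact sum_comm
      _ = ∑ j ∈ s, d j * ((if j = i then 1 else 0) - c) :=
          sum_congr rfl fun j hj => by rw [hγ j hj i hi]
      _ = d i := by simp [mul_sub, sum_sub_distrib, ← sum_mul, hd, hi]
  symm
  calc ∑ k ∈ t, (∑ j ∈ s, d j * γ k j) • ∑ i ∈ s, γ k i • E i
      = ∑ i ∈ s, (∑ k ∈ t, (∑ j ∈ s, d j * γ k j) * γ k i) • E i := by
        simp only [smul_sum, smul_smul, sum_smul]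
        exact sum_comm
    _ = ∑ i ∈ s, d i • E i := sum_congr rfl fun i hi => by rw [hcoef i hi]

theorem sum_sum_smul_mem_span
    (hγ : ∀ a ∈ s, ∀ b ∈ s, ∑ k ∈ t, γ k a * γ k b = (if a = b then 1 else 0) - c)
    {d : ι → ι → R} (hd : ∑ i ∈ s, d i i = 0) (E : ι → ι → V) :
    ∑ i ∈ s, ∑ j ∈ s, d i j • E i j ∈ Submodule.span R
      ({x | ∃ i ∈ s, ∃ j ∈ s, i ≠ j ∧ x = E i j} ∪ {x | ∃ k ∈ t, x = ∑ i ∈ s, γ k i • E i i}) := by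
  have hsplit : ∑ i ∈ s, ∑ j ∈ s, d i j • E i j =
      ∑ i ∈ s, d i i • E i i + ∑ i ∈ s, ∑ j ∈ s.erase i, d i j • E i j := by
    rw [← sum_add_distrib]
    exact sum_congr rfl fun i hi => (add_sum_erase _ _ hi).symm
  rw [hsplit, sum_smul_eq_sum_smul_sum_smul hγ hd]
  refine add_mem (sum_mem fun k hk => Submodule.smul_mem _ _ (Submodule.subset_span ?_))
    (sum_mem fun i hi => sum_mem fun j hj => Submodule.smul_mem _ _ (Submodule.subset_span ?_))
  · exact Or.inr ⟨k, hk, rfl⟩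
  · exact Or.inl ⟨i, hi, j, mem_of_mem_erase hj, (ne_of_mem_erase hj).symm, rfl⟩

end DiagonalExpansion

/-- The set `𝔩` of real traceless `n×n` matrices with all row and column sums
zero is a Lie subalgebra of `gl(n,ℝ)`, and it equals the linear span of the matrices `Aᵢⱼ`
(`1 ≤ i,j ≤ n−1`, `i ≠ j`) together with the matrices `Hₖ` (`1 ≤ k ≤ n−2`). -/
theorem stmt7 (n : ℕ) (hn : 2 ≤ n)
    (v : ℕ → Fin n → ℝ)
    (hv0 : ∀ k, v 0 k = 1 / Real.sqrt n)
    (horth : ∀ i, i < n → ∀ j, j < n → (∑ k, v i k * v j k) = if i = j then (1 : ℝ) else 0)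
    (hplane : ∀ i, 1 ≤ i → i < n → (∑ k, v i k) = 0)
    (γ : ℕ → ℕ → ℝ)
    (hγorth : ∀ k, 1 ≤ k → k ≤ n - 2 → ∀ l, 1 ≤ l → l ≤ n - 2 →
      (∑ m ∈ Finset.Ico 1 n, γ k m * γ l m) = if k = l then (1 : ℝ) else 0)
    (hγsum : ∀ k, 1 ≤ k → k ≤ n - 2 → (∑ m ∈ Finset.Ico 1 n, γ k m) = 0)
    (A : ℕ → ℕ → Matrix (Fin n) (Fin n) ℝ)
    (hA : ∀ i j, A i j = Matrix.vecMulVec (v i) (v j))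
    (H : ℕ → Matrix (Fin n) (Fin n) ℝ)
    (hH : ∀ k, H k = ∑ l ∈ Finset.Ico 1 n, γ k l • Matrix.vecMulVec (v l) (v l)) :
    ∃ L : LieSubalgebra ℝ (Matrix (Fin n) (Fin n) ℝ),
      (L : Set (Matrix (Fin n) (Fin n) ℝ)) =
        {M | M.trace = 0 ∧ (∀ i, (∑ j, M i j) = 0) ∧ (∀ j, (∑ i, M i j) = 0)} ∧
      L.toSubmodule = Submodule.span ℝ
        ({M | ∃ i j, 1 ≤ i ∧ i < n ∧ 1 ≤ j ∧ j < n ∧ i ≠ j ∧ M = A i j} ∪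
         {M | ∃ k, 1 ≤ k ∧ k ≤ n - 2 ∧ M = H k}) := by
  have hv := sum_range_vecMulVec_self_eq_one (Fintype.card_fin n) horth
  have hconst : v 0 = (√n)⁻¹ • 1 := funext fun k => by simp [hv0]
  have hγ := sum_mul_eq_ite_sub_of_orthonormal_of_sum_eq_zero (s := Ico 1 n) (t := Icc 1 (n - 2))
    (by simp only [Nat.card_Icc, Nat.card_Ico]; omega) (fun k hk l hl => by
      simp only [mem_Icc] at hk hl; exact hγorth k hk.1 hk.2 l hl.1 hl.2)
    (fun k hk => by simp only [mem_Icc] at hk; exact hγsum k hk.1 hk.2)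
  refine ⟨zeroSumLieSubalgebra (Fin n) ℝ, coe_zeroSumLieSubalgebra, le_antisymm (fun M hM => ?_) ?_⟩
  · obtain ⟨htr, hrow, hcol⟩ := mem_zeroSumLieSubalgebra_iff.mp hM
    have hM0 : M *ᵥ v 0 = 0 := by simp [hconst, mulVec_smul, hrow]
    have h0M : v 0 ᵥ* M = 0 := by simp [hconst, smul_vecMul, hcol]
    have hs : (range n).erase 0 = Ico 1 n := by
      ext; simp only [mem_erase, mem_range, mem_Ico]; omega
    rw [trace_eq_sum_erase_dotProduct_mulVec hv hM0, hs] at htr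
    rw [eq_sum_sum_erase_smul_vecMulVec hv hM0 h0M, hs]
    refine Submodule.span_mono ?_ (sum_sum_smul_mem_span hγ htr (fun i j => vecMulVec (v i) (v j)))
    rintro x (⟨i, hi, j, hj, hij, rfl⟩ | ⟨k, hk, rfl⟩)
    · simp only [mem_Ico] at hi hj
      exact Or.inl ⟨i, j, hi.1, hi.2, hj.1, hj.2, hij, (hA i j).symm⟩
    · simp only [mem_Icc] at hk
      exact Or.inr ⟨k, hk.1, hk.2, (hH k).symm⟩
  · rw [Submodule.span_le]
    rintro M (⟨i, j, hi, hin, hj, hjn, hij, rfl⟩ | ⟨k, hk, hkn, rfl⟩)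
    · rw [hA]
      exact vecMulVec_mem_zeroSumLieSubalgebra (hplane i hi hin) (hplane j hj hjn)
        ((horth i hin j hjn).trans (if_neg hij))
    · rw [hH]
      exact sum_smul_vecMulVec_self_mem_zeroSumLieSubalgebra
        (fun l hl => hplane l (mem_Ico.1 hl).1 (mem_Ico.1 hl).2)
        (fun l hl => (horth l (mem_Ico.1 hl).2 l (mem_Ico.1 hl).2).trans (if_pos rfl))
        (hγsum k hk hkn)
end

section
/- There exist two matrices X, Y in the stochastic Lie algebra 𝔰(n,ℝ) such that the Lie subalgebra of gl(n,ℝ) generated by {X, Y} equals 𝔰(n,ℝ); that is, 𝔰(n,ℝ) is generated as a Lie algebra by two elements. -/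
/-!
Conjugating by an invertible `P` with `P e₀ = 𝟙` identifies `𝔰(n,ℝ)` with the matrices whose
column `0` vanishes, which are spanned by the matrix units `E i j`, `j ≠ 0`. Take
`X = diag (3 ^ i - 1)` and `Y = ∑ E i j` over `i ≠ j`, `j ≠ 0`. Each `E i j` is an eigenvector of
`ad X` with eigenvalue `3 ^ i - 3 ^ j`, and these are pairwise distinct because a sum of two powers
of `3` determines its exponents; so the invariance of the generated subalgebra under `ad X`
separates `Y` into its summands. Brackets `⁅E i j, E j i⁆ = E i i - E j j` give the trace-zero
diagonal, and `X`, of nonzero trace, supplies the rest.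
-/

open Matrix Finset

attribute [local instance] LieRing.ofAssociativeRing

/-- The stochastic Lie algebra `𝔰(n,ℝ)`: real `n×n` matrices all of whose row sums vanish,
i.e. `A·𝟙 = 0`. -/
def sAlg (n : ℕ) : LieSubalgebra ℝ (Matrix (Fin n) (Fin n) ℝ) where
  carrier := {M | ∀ i, (∑ j, M i j) = 0}
  add_mem' := by
    intro A B hA hB i
    simp [Matrix.add_apply, Finset.sum_add_distrib, hA i, hB i]
  zero_mem' := by intro i; simp
  smul_mem' := by
    intro c A hA i
    simp [Matrix.smul_apply, ← Finset.mul_sum, hA i]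
  lie_mem' := by
    intro A B hA hB i
    have hrow : ∀ (X Y : Matrix (Fin n) (Fin n) ℝ), (∀ i, (∑ j, Y i j) = 0) →
        (∑ j, (X * Y) i j) = 0 := by
      intro X Y hY
      simp only [Matrix.mul_apply]
      rw [Finset.sum_comm]
      simp [← Finset.mul_sum, hY]
    rw [Ring.lie_def]
    simp [Matrix.sub_apply, Finset.sum_sub_distrib, hrow A B hB, hrow B A hA]

theorem Submodule.mem_of_sum_mem_of_eigenvectors {K V ι : Type*} [Field K] [AddCommGroup V]
    [Module K V] [DecidableEq ι] {p : Submodule K V} {f : Module.End K V}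
    (hp : ∀ x ∈ p, f x ∈ p) {μ : ι → K} {s : Finset ι} (hμ : Set.InjOn μ s) {v : ι → V}
    (hv : ∀ i ∈ s, f (v i) = μ i • v i) (hsum : ∑ i ∈ s, v i ∈ p) : ∀ i ∈ s, v i ∈ p := by
  induction s using Finset.induction_on generalizing v with
  | empty => simp
  | insert a s ha ih =>
    rw [Finset.sum_insert ha] at hsum
    have hμa : ∀ i ∈ s, μ i - μ a ≠ 0 := fun i hi h =>
      ha (hμ (Finset.mem_insert_of_mem hi) (Finset.mem_insert_self a s) (sub_eq_zero.mp h) ▸ hi)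
    -- `f - μ a` kills `v a` and rescales the other eigenvectors by `μ i - μ a ≠ 0`.
    have hshift : ∑ i ∈ s, (μ i - μ a) • v i ∈ p := by
      have h := p.sub_mem (hp _ hsum) (p.smul_mem (μ a) hsum)
      convert h using 1
      simp only [map_add, map_sum, hv a (Finset.mem_insert_self a s), smul_add, Finset.smul_sum,
        sub_smul, Finset.sum_sub_distrib]
      rw [Finset.sum_congr rfl fun i hi => hv i (Finset.mem_insert_of_mem hi)]
      abel
    have hs : ∀ i ∈ s, v i ∈ p := by
      intro i hi
      have := ih (hμ.mono (by simp)) (v := fun i => (μ i - μ a) • v i)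
        (fun j hj => by rw [map_smul, hv j (Finset.mem_insert_of_mem hj), smul_comm]) hshift i hi
      simpa [smul_smul, inv_mul_cancel₀ (hμa i hi)] using p.smul_mem (μ i - μ a)⁻¹ this
    intro i hi
    rcases Finset.mem_insert.mp hi with rfl | hi
    · simpa using p.sub_mem hsum (p.sum_mem hs)
    · exact hs i hi

theorem Nat.log_pow_add_pow {k a b : ℕ} (hk : 2 < k) (hab : a ≤ b) :
    Nat.log k (k ^ a + k ^ b) = b := by
  refine Nat.log_eq_of_pow_le_of_lt_pow (Nat.le_add_left _ _) ?_
  have := Nat.pow_le_pow_right (n := k) (by omega) hab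
  calc k ^ a + k ^ b ≤ k ^ b * 2 := by omega
    _ < k ^ b * k := Nat.mul_lt_mul_of_pos_left hk (by positivity)

theorem Nat.eq_and_eq_or_eq_and_eq_of_pow_add_pow_eq {k a b c d : ℕ} (hk : 2 < k)
    (h : k ^ a + k ^ b = k ^ c + k ^ d) : a = c ∧ b = d ∨ a = d ∧ b = c := by
  have hsort : ∀ x y, k ^ x + k ^ y = k ^ min x y + k ^ max x y := by
    intro x y
    rcases le_total x y with hxy | hxy
    · rw [min_eq_left hxy, max_eq_right hxy]
    · rw [min_eq_right hxy, max_eq_left hxy, add_comm]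
  rw [hsort, hsort c] at h
  have hmax : max a b = max c d := by
    rw [← Nat.log_pow_add_pow hk (min_le_max (a := a)), h, Nat.log_pow_add_pow hk min_le_max]
  rw [hmax, Nat.add_right_cancel_iff] at h
  have hmin := Nat.pow_right_injective (by omega : 2 ≤ k) h
  omega

namespace Matrix

section Annihilator

variable {R ι : Type*} [CommRing R] [Fintype ι] [DecidableEq ι]

def lieAnnihilator (v : ι → R) : LieSubalgebra R (Matrix ι ι R) where
  carrier := {M | M *ᵥ v = 0}
  add_mem' {A B} hA hB := by simp_all [add_mulVec]
  zero_mem' := zero_mulVec v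
  smul_mem' c A hA := by simp_all [smul_mulVec]
  lie_mem' {A B} hA hB := by
    simp_all [Ring.lie_def, sub_mulVec, ← mulVec_mulVec]

theorem mem_lieAnnihilator {v : ι → R} {M : Matrix ι ι R} :
    M ∈ lieAnnihilator v ↔ M *ᵥ v = 0 :=
  Iff.rfl

theorem mem_lieAnnihilator_single_one {o : ι} {M : Matrix ι ι R} :
    M ∈ lieAnnihilator (Pi.single o 1) ↔ ∀ i, M i o = 0 := by
  rw [mem_lieAnnihilator, mulVec_single_one, funext_iff]
  rfl

theorem map_lieConj_lieAnnihilator (P : Matrix ι ι R) (h : Invertible P) (v : ι → R) :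
    (lieAnnihilator v).map (P.lieConj h) = lieAnnihilator (P *ᵥ v) := by
  ext M
  simp only [LieSubalgebra.mem_map, LieEquiv.coe_toLieHom, lieConj_apply, mem_lieAnnihilator]
  constructor
  · rintro ⟨N, hN, rfl⟩
    rw [mulVec_mulVec, mul_assoc, mul_assoc, inv_mul_of_invertible, mul_one, ← mulVec_mulVec,
      hN, mulVec_zero]
  · intro hM
    refine ⟨P⁻¹ * M * P, ?_, ?_⟩
    · rw [← mulVec_mulVec, ← mulVec_mulVec, hM, mulVec_zero]
    · rw [← mul_assoc, ← mul_assoc, mul_inv_of_invertible, one_mul, mul_assoc,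
        mul_inv_of_invertible, mul_one]

-- `P = 1 + u vᵀ` with `u = 𝟙 - e_o`, `v = e_o`; since `v ⬝ u = 0`, `u vᵀ` squares to zero.
theorem exists_isUnit_mulVec_single_one (o : ι) :
    ∃ P : Matrix ι ι R, IsUnit P ∧ P *ᵥ Pi.single o 1 = 1 := by
  set N := vecMulVec (1 - Pi.single o 1 : ι → R) (Pi.single o 1)
  have hvu : Pi.single o 1 ⬝ᵥ (1 - Pi.single o 1 : ι → R) = 0 := by simp
  refine ⟨1 + N, IsNilpotent.isUnit_one_add ⟨2, ?_⟩, ?_⟩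
  · rw [pow_two, vecMulVec_mul_vecMulVec, hvu, zero_smul, vecMulVec_zero]
  · rw [add_mulVec, one_mulVec, vecMulVec_mulVec]
    simp

end Annihilator

section TwoGenerators

variable {K ι : Type*} [Field K] [Fintype ι] [DecidableEq ι]

theorem lie_diagonal_single (d : ι → K) (i j : ι) (c : K) :
    ⁅diagonal d, single i j c⁆ = (d i - d j) • single i j c := by
  ext a b
  simp only [Ring.lie_def, sub_apply, diagonal_mul, mul_diagonal, smul_apply, single_apply,
    smul_eq_mul]
  split_ifs with h
  · rw [← h.1, ← h.2]; ring
  · ring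

theorem lie_single_single (i j : ι) :
    ⁅single i j (1 : K), single j i (1 : K)⁆ = single i i 1 - single j j 1 := by
  rw [Ring.lie_def, single_mul_single_same, single_mul_single_same, mul_one]

def offDiagOnes (o : ι) : Matrix ι ι K :=
  ∑ p ∈ univ.offDiag with p.2 ≠ o, single p.1 p.2 1

variable {d : ι → K} {o : ι}

theorem single_mem_lieSpan_of_ne
    (hd : Set.InjOn (fun p : ι × ι => d p.1 - d p.2) {p | p.1 ≠ p.2})
    {i j : ι} (hij : i ≠ j) (hj : j ≠ o) :
    single i j 1 ∈ LieSubalgebra.lieSpan K (Matrix ι ι K) {diagonal d, offDiagOnes o} := by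
  set S := LieSubalgebra.lieSpan K (Matrix ι ι K) {diagonal d, offDiagOnes o}
  have hX : diagonal d ∈ S := LieSubalgebra.subset_lieSpan (by simp)
  refine S.toSubmodule.mem_of_sum_mem_of_eigenvectors (f := LieAlgebra.ad K _ (diagonal d))
    (fun x hx => S.lie_mem hX hx) (s := {p ∈ univ.offDiag | p.2 ≠ o})
    (μ := fun p : ι × ι => d p.1 - d p.2)
    (hd.mono fun p hp => (Finset.mem_offDiag.mp (Finset.mem_filter.mp hp).1).2.2)
    (v := fun p => single p.1 p.2 1) (fun p _ => lie_diagonal_single d _ _ _)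
    (LieSubalgebra.subset_lieSpan (by simp [offDiagOnes])) (i, j) (by simp [hij, hj])

theorem single_diag_mem_lieSpan (hdo : d o = 0) (hsum : ∑ i, d i ≠ 0)
    (hd : Set.InjOn (fun p : ι × ι => d p.1 - d p.2) {p | p.1 ≠ p.2}) {j : ι} (hj : j ≠ o) :
    single j j 1 ∈ LieSubalgebra.lieSpan K (Matrix ι ι K) {diagonal d, offDiagOnes o} := by
  set S := LieSubalgebra.lieSpan K (Matrix ι ι K) {diagonal d, offDiagOnes o}
  have hX : diagonal d ∈ S := LieSubalgebra.subset_lieSpan (by simp)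
  have hdiff : ∀ i, d i • (single i i (1 : K) - single j j 1) ∈ S := by
    intro i
    rcases eq_or_ne i o with rfl | hio
    · simp [hdo]
    rcases eq_or_ne i j with rfl | hij
    · simp
    rw [← lie_single_single]
    exact S.smul_mem _ (S.lie_mem (single_mem_lieSpan_of_ne hd hij hj)
      (single_mem_lieSpan_of_ne hd hij.symm hio))
  have hsmul : (∑ i, d i) • single j j (1 : K) =
      diagonal d - ∑ i, d i • (single i i 1 - single j j 1) := by
    simp only [smul_sub, Finset.sum_sub_distrib, smul_single, smul_eq_mul, mul_one,
      sum_single_eq_diagonal, Finset.sum_smul]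
    abel
  have h := S.smul_mem (∑ i, d i)⁻¹ (hsmul ▸ S.sub_mem hX (S.sum_mem fun i _ => hdiff i))
  rwa [smul_smul, inv_mul_cancel₀ hsum, one_smul] at h

theorem lieSpan_diagonal_offDiagOnes (hdo : d o = 0) (hsum : ∑ i, d i ≠ 0)
    (hd : Set.InjOn (fun p : ι × ι => d p.1 - d p.2) {p | p.1 ≠ p.2}) :
    LieSubalgebra.lieSpan K (Matrix ι ι K) {diagonal d, offDiagOnes o} =
      lieAnnihilator (Pi.single o 1) := by
  have hsingle : ∀ i j, j ≠ o → single i j (1 : K) ∈ lieAnnihilator (Pi.single o 1) :=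
    fun i j hj => mem_lieAnnihilator_single_one.mpr fun a => by simp [hj]
  apply le_antisymm
  · rw [LieSubalgebra.lieSpan_le, Set.insert_subset_iff, Set.singleton_subset_iff]
    constructor
    · exact mem_lieAnnihilator_single_one.mpr fun a => by
        by_cases h : a = o <;> simp [h, hdo]
    · exact Submodule.sum_mem _ fun p hp => hsingle _ _ (Finset.mem_filter.mp hp).2
  · intro M hM
    rw [mem_lieAnnihilator_single_one] at hM
    rw [matrix_eq_sum_single M]
    refine Submodule.sum_mem _ fun i _ => Submodule.sum_mem _ fun j _ => ?_
    rcases eq_or_ne j o with rfl | hj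
    · simp [hM]
    rw [← mul_one (M i j), ← smul_eq_mul, ← smul_single]
    refine Submodule.smul_mem _ _ ?_
    rcases eq_or_ne i j with rfl | hij
    · exact single_diag_mem_lieSpan hdo hsum hd hj
    · exact single_mem_lieSpan_of_ne hd hij hj

end TwoGenerators

end Matrix

theorem injOn_pow_sub_pow {k : ℕ} (hk : 2 < k) :
    Set.InjOn (fun p : ℕ × ℕ => (k : ℝ) ^ p.1 - (k : ℝ) ^ p.2) {p | p.1 ≠ p.2} := by
  rintro ⟨a, b⟩ hab ⟨c, d⟩ - h
  have h' : k ^ a + k ^ d = k ^ c + k ^ b := by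
    simp only at h
    exact_mod_cast (by linarith : (k : ℝ) ^ a + k ^ d = k ^ c + k ^ b)
  rcases Nat.eq_and_eq_or_eq_and_eq_of_pow_add_pow_eq hk h' with ⟨rfl, rfl⟩ | ⟨rfl, -⟩
  · rfl
  · exact absurd rfl hab

theorem sAlg_eq_lieAnnihilator_one (n : ℕ) : sAlg n = Matrix.lieAnnihilator 1 := by
  ext M
  simp [sAlg, Matrix.mem_lieAnnihilator, funext_iff, Matrix.mulVec, dotProduct]

/-- The stochastic Lie algebra `𝔰(n,ℝ)` is generated, as a Lie algebra,
by two of its elements. -/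
theorem stmt18 (n : ℕ) (hn : 2 ≤ n) :
    ∃ X Y : Matrix (Fin n) (Fin n) ℝ, X ∈ sAlg n ∧ Y ∈ sAlg n ∧
      LieSubalgebra.lieSpan ℝ (Matrix (Fin n) (Fin n) ℝ) {X, Y} = sAlg n := by
  set o : Fin n := ⟨0, by omega⟩
  set d : Fin n → ℝ := fun i => 3 ^ (i : ℕ) - 1
  have hdo : d o = 0 := by simp [d, o]
  have hsum : ∑ i, d i ≠ 0 :=
    (Finset.sum_pos' (fun i _ => sub_nonneg.mpr (one_le_pow₀ (by norm_num)))
      ⟨⟨1, hn⟩, Finset.mem_univ _, by norm_num [d]⟩).ne'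
  have hd : Set.InjOn (fun p : Fin n × Fin n => d p.1 - d p.2) {p | p.1 ≠ p.2} := by
    intro p hp q hq h
    have := injOn_pow_sub_pow (k := 3) (by norm_num) (x₁ := (p.1, p.2)) (x₂ := (q.1, q.2))
      (by simpa [Fin.val_inj] using hp) (by simpa [Fin.val_inj] using hq)
      (by simp only [d] at h ⊢; push_cast; linarith)
    simp only [Prod.mk.injEq, Fin.val_inj] at this
    exact Prod.ext this.1 this.2
  obtain ⟨P, hP, hPo⟩ := Matrix.exists_isUnit_mulVec_single_one (R := ℝ) o
  set f := P.lieConj hP.invertible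
  have hspan : LieSubalgebra.lieSpan ℝ _ {f (Matrix.diagonal d), f (Matrix.offDiagOnes o)} =
      sAlg n := by
    rw [sAlg_eq_lieAnnihilator_one, ← hPo, ← Matrix.map_lieConj_lieAnnihilator,
      ← Matrix.lieSpan_diagonal_offDiagOnes hdo hsum hd, LieSubalgebra.map_lieSpan,
      Set.image_pair]
    rfl
  exact ⟨_, _, hspan ▸ LieSubalgebra.subset_lieSpan (by simp),
    hspan ▸ LieSubalgebra.subset_lieSpan (by simp), hspan⟩
end

section
/- Let M be the orthogonal n×n matrix whose columns are v₀, v₁, …, v_{n−1}. Then the linear map S ↦ Mᵀ S M is a Lie algebra isomorphism from the stochastic Lie algebra 𝔰(n,ℝ) onto the Lie subalgebra 𝔞 of gl(n,ℝ) consisting of all real n×n matrices whose first column is zero; in particular, for every S with S𝟙 = 0 the matrix MᵀSM has zero first column, the map is bijective from 𝔰(n,ℝ) onto 𝔞, and it preserves the commutator. -/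
open Matrix Finset

attribute [local instance] LieRing.ofAssociativeRing

/-- The Lie subalgebra `𝔞` of `gl(n,ℝ)` of matrices whose first column is zero. -/
def aAlg (n : ℕ) : LieSubalgebra ℝ (Matrix (Fin n) (Fin n) ℝ) where
  carrier := {M | ∀ (i : Fin n) (j : Fin n), (j : ℕ) = 0 → M i j = 0}
  add_mem' := by
    intro A B hA hB i j hj
    simp [Matrix.add_apply, hA i j hj, hB i j hj]
  zero_mem' := by intro i j hj; simp
  smul_mem' := by
    intro c A hA i j hj
    simp [Matrix.smul_apply, hA i j hj]
  lie_mem' := by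
    intro A B hA hB i j hj
    have key : ∀ X Y : Matrix (Fin n) (Fin n) ℝ, (∀ (i : Fin n) (j : Fin n), (j : ℕ) = 0 → Y i j = 0) →
        (X * Y) i j = 0 := by
      intro X Y hY
      simp only [Matrix.mul_apply]
      exact Finset.sum_eq_zero fun k _ => by rw [hY k j hj, mul_zero]
    rw [Ring.lie_def]
    simp [Matrix.sub_apply, key A B hB, key B A hA]

/-! For orthogonal `M` the map `S ↦ Mᵀ S M` is conjugation by `Mᵀ = M⁻¹`, hence a Lie algebra
automorphism of `gl(n, ℝ)`. The first column of `Mᵀ S M` is `Mᵀ S (M e₀) = Mᵀ S v₀ = Mᵀ S 𝟙 / √n`,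
and `Mᵀ` is injective, so it vanishes exactly when `S 𝟙 = 0`: the automorphism maps `𝔰(n, ℝ)`
onto `𝔞`. -/

namespace Matrix

variable {ι K : Type*} [Fintype ι] [DecidableEq ι]

theorem mulVec_eq_zero_iff_of_mul_eq_one [CommRing K] {A B : Matrix ι ι K} (h : B * A = 1)
    {x : ι → K} : A *ᵥ x = 0 ↔ x = 0 := by
  refine ⟨fun hx => ?_, fun hx => by rw [hx, mulVec_zero]⟩
  rw [← one_mulVec x, ← h, ← mulVec_mulVec, hx, mulVec_zero]

theorem transpose_mul_mul_mulVec_single_eq_zero_iff [Field K] {M : Matrix ι ι K}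
    (hM : Mᵀ * M = 1) {j : ι} {c : K} (hc : c ≠ 0) (hcol : ∀ i, M i j = c) (S : Matrix ι ι K) :
    (Mᵀ * S * M) *ᵥ Pi.single j 1 = 0 ↔ S *ᵥ 1 = 0 := by
  have hMj : M *ᵥ Pi.single j 1 = c • 1 := by
    ext i
    simp [hcol]
  rw [← mulVec_mulVec, hMj, ← mulVec_mulVec, mulVec_smul,
    mulVec_eq_zero_iff_of_mul_eq_one (mul_eq_one_comm.mp hM), smul_eq_zero, or_iff_right hc]

variable [CommRing K]

def lieConjTranspose (M : Matrix ι ι K) (hM : Mᵀ * M = 1) : Matrix ι ι K ≃ₗ⁅K⁆ Matrix ι ι K :=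
  Mᵀ.lieConj (invertibleOfRightInverse _ _ hM)

theorem lieConjTranspose_apply (M : Matrix ι ι K) (hM : Mᵀ * M = 1) (S : Matrix ι ι K) :
    M.lieConjTranspose hM S = Mᵀ * S * M := by
  rw [lieConjTranspose, lieConj_apply, inv_eq_right_inv hM]

end Matrix

theorem LieSubalgebra.map_eq_of_forall_mem_iff {R L L' : Type*} [CommRing R] [LieRing L]
    [LieAlgebra R L] [LieRing L'] [LieAlgebra R L'] (e : L ≃ₗ⁅R⁆ L') {H : LieSubalgebra R L}
    {H' : LieSubalgebra R L'} (h : ∀ x, e x ∈ H' ↔ x ∈ H) : H.map e.toLieHom = H' := by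
  ext y
  rw [LieSubalgebra.mem_map]
  refine ⟨?_, fun hy => ⟨e.symm y, (h _).mp (by simpa using hy), by simp⟩⟩
  rintro ⟨x, hx, rfl⟩
  exact (h x).mpr hx

theorem mem_sAlg_iff {n : ℕ} {S : Matrix (Fin n) (Fin n) ℝ} : S ∈ sAlg n ↔ S *ᵥ 1 = 0 := by
  simp only [funext_iff, mulVec, dotProduct, Pi.one_apply, mul_one, Pi.zero_apply]
  rfl

theorem mem_aAlg_iff {n : ℕ} (hn : 0 < n) {A : Matrix (Fin n) (Fin n) ℝ} :
    A ∈ aAlg n ↔ A *ᵥ Pi.single ⟨0, hn⟩ 1 = 0 := by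
  rw [mulVec_single_one, funext_iff]
  refine ⟨fun hA i => hA i _ rfl, fun hA i j hj => ?_⟩
  obtain rfl : j = ⟨0, hn⟩ := Fin.ext hj
  exact hA i

theorem stmt19_general (n : ℕ) (hn : 2 ≤ n)
    (v : ℕ → Fin n → ℝ)
    (hv0 : ∀ k, v 0 k = 1 / Real.sqrt n)
    (horth : ∀ i, i < n → ∀ j, j < n → (∑ k, v i k * v j k) = if i = j then (1 : ℝ) else 0)
    (M : Matrix (Fin n) (Fin n) ℝ)
    (hM : ∀ i j, M i j = v (j : ℕ) i) :
    ∃ e : sAlg n ≃ₗ⁅ℝ⁆ aAlg n,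
      ∀ X : sAlg n, ((e X : Matrix (Fin n) (Fin n) ℝ)) = Mᵀ * (X : Matrix (Fin n) (Fin n) ℝ) * M := by
  have hpos : 0 < n := by omega
  have horthM : Mᵀ * M = 1 := by
    ext i j
    simp only [mul_apply, transpose_apply, one_apply, hM, horth i i.isLt j j.isLt, Fin.val_inj]
  have hcol : ∀ i, M i ⟨0, hpos⟩ = 1 / Real.sqrt n := fun i => by rw [hM, hv0]
  have hc : 1 / Real.sqrt n ≠ 0 := by positivity
  have hmap : (sAlg n).map (M.lieConjTranspose horthM).toLieHom = aAlg n :=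
    LieSubalgebra.map_eq_of_forall_mem_iff _ fun S => by
      rw [mem_aAlg_iff hpos, lieConjTranspose_apply, mem_sAlg_iff,
        transpose_mul_mul_mulVec_single_eq_zero_iff horthM hc hcol]
  exact ⟨.ofSubalgebras _ _ _ hmap, fun X => lieConjTranspose_apply M horthM X⟩

/-- Let `M` be the orthogonal matrix whose columns are `v₀, v₁, …, v_{n−1}`.
Then `S ↦ Mᵀ S M` is a Lie algebra isomorphism from the stochastic Lie algebra `𝔰(n,ℝ)` onto
the Lie subalgebra `𝔞` of matrices with zero first column: there is a Lie algebra equivalence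
`e : 𝔰(n,ℝ) ≃ 𝔞` acting by `S ↦ Mᵀ S M`. -/
theorem stmt19 (n : ℕ) (hn : 2 ≤ n)
    (v : ℕ → Fin n → ℝ)
    (hv0 : ∀ k, v 0 k = 1 / Real.sqrt n)
    (horth : ∀ i, i < n → ∀ j, j < n → (∑ k, v i k * v j k) = if i = j then (1 : ℝ) else 0)
    (hplane : ∀ i, 1 ≤ i → i < n → (∑ k, v i k) = 0)
    (M : Matrix (Fin n) (Fin n) ℝ)
    (hM : ∀ i j, M i j = v (j : ℕ) i) :
    ∃ e : sAlg n ≃ₗ⁅ℝ⁆ aAlg n,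
      ∀ X : sAlg n, ((e X : Matrix (Fin n) (Fin n) ℝ)) = Mᵀ * (X : Matrix (Fin n) (Fin n) ℝ) * M :=
  stmt19_general n hn v hv0 horth M hM
end
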